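/- For a stall value δ ∈ ℕ, define V_δ(i) = Σ_{u=1}^{U} ⌊min(η_u, R_u(s + (i−1)·L + δ))/Y⌋. Suppose there exists δ with i ≤ V_δ(i) for every i ∈ {1,…,C}. Then the least such δ* exists and satisfies: (a) all C chunks admit a feasible assignment with deadlines d(i) = s + (i−1)·L + δ*; and (b) for any nondecreasing stall sequence 0 ≤ d(1) ≤ d(2) ≤ … ≤ d(C) of naturals such that all C chunks admit a feasible assignment with deadlines s + (i−1)·L + d(i), the total stall satisfies d(C) ≥ δ*. Hence δ* is the minimum total stall duration in no-skip streaming, and it is achieved by placing the entire stall at the beginning. -/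
import Mathlib


/-- Cumulative bandwidth of a link up to time `t`: `R(t) = Σ_{j=1}^t B(j)`. -/
noncomputable def cumBW (B : ℕ → ℝ) (t : ℕ) : ℝ := ∑ j ∈ Finset.Icc 1 t, B j

/-- `V(i) = Σ_{u=1}^U ⌊min(η_u, R_u(d(i)))/Y⌋`. -/
noncomputable def Vval (U : ℕ) (Y : ℝ) (d : ℕ → ℕ) (B : Fin U → ℕ → ℝ)
    (η : Fin U → ℝ) (i : ℕ) : ℕ :=
  ∑ u : Fin U, ⌊min (η u) (cumBW (B u) (d i)) / Y⌋₊

/-- A feasible assignment for a set `S` of chunks: a link choice `ℓ i` and download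
amounts `z i j ≥ 0` so that each chunk `i ∈ S` gets its full layer of size `Y` over
link `ℓ i` by its deadline `d i`, respecting per-slot bandwidths and per-link
maximum contributions. -/
def FeasibleAssignment (U : ℕ) (Y : ℝ) (d : ℕ → ℕ) (B : Fin U → ℕ → ℝ)
    (η : Fin U → ℝ) (S : Finset ℕ) : Prop :=
  ∃ (ℓ : ℕ → Fin U) (z : ℕ → ℕ → ℝ),
    (∀ i ∈ S, ∀ j, 0 ≤ z i j) ∧
    (∀ i ∈ S, ∑ j ∈ Finset.Icc 1 (d i), z i j = Y) ∧
    (∀ i ∈ S, ∀ j, (j < 1 ∨ d i < j) → z i j = 0) ∧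
    (∀ u : Fin U, ∀ j, 1 ≤ j →
      ∑ i ∈ S.filter (fun i => ℓ i = u), z i j ≤ B u j) ∧
    (∀ u : Fin U,
      ∑ i ∈ S.filter (fun i => ℓ i = u), ∑ j ∈ Finset.Icc 1 (d i), z i j ≤ η u)

lemma cumBW_zero (B : ℕ → ℝ) : cumBW B 0 = 0 := by simp [cumBW]

lemma cumBW_succ (B : ℕ → ℝ) (j : ℕ) : cumBW B (j+1) = cumBW B j + B (j+1) := by
  rw [cumBW, cumBW, Finset.sum_Icc_succ_top (by omega)]

lemma cumBW_mono (B : ℕ → ℝ) (hB : ∀ j, 1 ≤ j → 0 ≤ B j) {t t' : ℕ} (h : t ≤ t') :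
    cumBW B t ≤ cumBW B t' := by
  apply Finset.sum_le_sum_of_subset_of_nonneg (Finset.Icc_subset_Icc_right h)
  intro j hj _; exact hB j (Finset.mem_Icc.mp hj).1

lemma cumBW_nonneg (B : ℕ → ℝ) (hB : ∀ j, 1 ≤ j → 0 ≤ B j) (t : ℕ) : 0 ≤ cumBW B t := by
  have := cumBW_mono B hB (Nat.zero_le t); rwa [cumBW_zero] at this

lemma telescope_Icc (f : ℕ → ℝ) (T : ℕ) :
    ∑ j ∈ Finset.Icc 1 T, (f j - f (j-1)) = f T - f 0 := by
  induction T with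
  | zero => simp
  | succ T ih => rw [Finset.sum_Icc_succ_top (by omega), ih]; simp

lemma sum_clamp {Y : ℝ} (hY : 0 < Y) {x : ℝ} (hx : 0 ≤ x) (N : ℕ) :
    ∑ q ∈ Finset.range N, (min (max x ((q:ℝ)*Y)) (((q:ℝ)+1)*Y) - (q:ℝ)*Y)
      = min x ((N:ℝ)*Y) := by
  induction N with
  | zero => simp [min_eq_right hx]
  | succ N ih =>
    rw [Finset.sum_range_succ, ih]
    push_cast
    rcases le_total x ((N:ℝ)*Y) with h | h
    · rw [min_eq_left h, max_eq_right h,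
        min_eq_left (by nlinarith : (N:ℝ)*Y ≤ ((N:ℝ)+1)*Y),
        min_eq_left (by nlinarith : x ≤ ((N:ℝ)+1)*Y)]
      ring
    · rw [min_eq_right h, max_eq_left h]
      ring

lemma clamp_mono {a b x x' : ℝ} (h : x ≤ x') : min (max x a) b ≤ min (max x' a) b :=
  min_le_min (max_le_max h (le_refl a)) (le_refl b)

noncomputable def pickLink {U : ℕ} (hU : 0 < U) (cap c : Fin U → ℕ) : Fin U :=
  if h : ∃ u, c u < cap u then h.choose else ⟨0, hU⟩

lemma pickLink_spec {U : ℕ} (hU : 0 < U) (cap c : Fin U → ℕ) (h : ∃ u, c u < cap u) :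
    c (pickLink hU cap c) < cap (pickLink hU cap c) := by
  rw [pickLink, dif_pos h]; exact h.choose_spec

noncomputable def gc {U : ℕ} (hU : 0 < U) (cap : ℕ → Fin U → ℕ) : ℕ → Fin U → ℕ
  | 0 => fun _ => 0
  | i+1 => fun u => gc hU cap i u + if pickLink hU (cap (i+1)) (gc hU cap i) = u then 1 else 0

noncomputable def gl {U : ℕ} (hU : 0 < U) (cap : ℕ → Fin U → ℕ) (i : ℕ) : Fin U :=
  pickLink hU (cap i) (gc hU cap (i-1))

lemma gc_succ {U : ℕ} (hU : 0 < U) (cap : ℕ → Fin U → ℕ) (i : ℕ) (u : Fin U) :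
    gc hU cap (i+1) u = gc hU cap i u + if gl hU cap (i+1) = u then 1 else 0 := rfl

lemma gl_eq {U : ℕ} (hU : 0 < U) (cap : ℕ → Fin U → ℕ) (i : ℕ) :
    gl hU cap i = pickLink hU (cap i) (gc hU cap (i-1)) := rfl

lemma sum_gc {U : ℕ} (hU : 0 < U) (cap : ℕ → Fin U → ℕ) (i : ℕ) :
    ∑ u : Fin U, gc hU cap i u = i := by
  induction i with
  | zero => simp [gc]
  | succ i ih =>
    simp only [gc_succ, Finset.sum_add_distrib, ih]
    rw [Finset.sum_ite_eq (Finset.univ) (gl hU cap (i+1)) (fun _ => 1)]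
    simp

lemma gc_card {U : ℕ} (hU : 0 < U) (cap : ℕ → Fin U → ℕ) (i : ℕ) (u : Fin U) :
    gc hU cap i u = ((Finset.Icc 1 i).filter (fun k => gl hU cap k = u)).card := by
  induction i with
  | zero => simp [gc]
  | succ i ih =>
    rw [gc_succ, ih, show Finset.Icc 1 (i+1) = insert (i+1) (Finset.Icc 1 i) by
      rw [← Finset.insert_Icc_right_eq_Icc_add_one (by omega)], Finset.filter_insert]
    split
    · rw [Finset.card_insert_of_notMem (by simp)]
    · simp

lemma gc_mono {U : ℕ} (hU : 0 < U) (cap : ℕ → Fin U → ℕ) {i i' : ℕ} (h : i ≤ i') (u : Fin U) :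
    gc hU cap i u ≤ gc hU cap i' u := by
  rw [gc_card, gc_card]
  exact Finset.card_le_card (Finset.filter_subset_filter _ (Finset.Icc_subset_Icc_right h))

lemma gc_le_self {U : ℕ} (hU : 0 < U) (cap : ℕ → Fin U → ℕ) (i : ℕ) (u : Fin U) :
    gc hU cap i u ≤ i := by
  conv_rhs => rw [← sum_gc hU cap i]
  exact Finset.single_le_sum (fun v _ => Nat.zero_le _) (Finset.mem_univ u)

/-- With deadlines `s + (i−1)·L + δ` and `V_δ(i) = Σ_u ⌊min(η_u, R_u(s+(i−1)L+δ))/Y⌋`,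
if some stall `δ` satisfies `i ≤ V_δ(i)` for all `i ∈ {1,…,C}`, then the least such
`δ*` exists, all chunks are feasible with the whole stall `δ*` placed at the start,
and any nondecreasing stall sequence `d(1) ≤ … ≤ d(C)` making all chunks feasible
has total stall `d(C) ≥ δ*`. -/
theorem min_stall_at_start
    (C U : ℕ) (hU : 1 ≤ U) (Y : ℝ) (hY : 0 < Y)
    (s L : ℕ) (hL : 1 ≤ L)
    (B : Fin U → ℕ → ℝ) (hB : ∀ u j, 1 ≤ j → 0 ≤ B u j)
    (η : Fin U → ℝ) (hη : ∀ u, 0 ≤ η u)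
    (hex : ∃ δ : ℕ, ∀ i ∈ Finset.Icc 1 C,
      i ≤ Vval U Y (fun i => s + (i - 1) * L + δ) B η i) :
    ∃ δstar : ℕ,
      IsLeast {δ : ℕ | ∀ i ∈ Finset.Icc 1 C,
        i ≤ Vval U Y (fun i => s + (i - 1) * L + δ) B η i} δstar ∧
      FeasibleAssignment U Y (fun i => s + (i - 1) * L + δstar) B η
        (Finset.Icc 1 C) ∧
      (∀ dstall : ℕ → ℕ, Monotone dstall →
        FeasibleAssignment U Y (fun i => s + (i - 1) * L + dstall i) B η
          (Finset.Icc 1 C) →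
        δstar ≤ dstall C) := by
  classical
  have hU0 : 0 < U := hU
  have hexP : ∃ δ : ℕ, ∀ i ∈ Finset.Icc 1 C,
      i ≤ Vval U Y (fun i => s + (i - 1) * L + δ) B η i := hex
  set δstar := Nat.find hexP with hδdef
  have hstar := Nat.find_spec hexP
  refine ⟨δstar, ⟨hstar, fun δ hδ => Nat.find_le hδ⟩, ?_, ?_⟩
  · -- feasibility with stall δstar at the start
    set t : ℕ → ℕ := fun i => s + (i-1)*L + δstar with ht
    set caps : ℕ → Fin U → ℕ := fun i u => ⌊min (η u) (cumBW (B u) (t i)) / Y⌋₊ with hcapsdef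
    have hcapsum : ∀ i ∈ Finset.Icc 1 C, i ≤ ∑ u : Fin U, caps i u := by
      intro i hi
      simpa [Vval, hcapsdef, ht] using hstar i hi
    set ℓ : ℕ → Fin U := gl hU0 caps with hℓ
    set p : ℕ → ℕ := fun i => gc hU0 caps (i-1) (ℓ i) with hp
    have hsucc : ∀ i ∈ Finset.Icc 1 C, ∃ u, gc hU0 caps (i-1) u < caps i u := by
      intro i hi
      by_contra hcon
      push_neg at hcon
      have h1 : ∑ u : Fin U, caps i u ≤ ∑ u : Fin U, gc hU0 caps (i-1) u :=
        Finset.sum_le_sum fun u _ => hcon u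
      rw [sum_gc] at h1
      have h2 := hcapsum i hi
      have h3 : 1 ≤ i := (Finset.mem_Icc.mp hi).1
      omega
    have hrank : ∀ i ∈ Finset.Icc 1 C, p i < caps i (ℓ i) := by
      intro i hi
      have := pickLink_spec hU0 (caps i) (gc hU0 caps (i-1)) (hsucc i hi)
      simpa [hp, hℓ, gl_eq] using this
    have hgcstep : ∀ i : ℕ, 1 ≤ i → ∀ u, ℓ i = u →
        gc hU0 caps i u = gc hU0 caps (i-1) u + 1 := by
      intro i hi1 u hu
      obtain ⟨i', rfl⟩ : ∃ i', i = i' + 1 := ⟨i - 1, by omega⟩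
      rw [gc_succ]
      simp only [Nat.add_sub_cancel] at hu ⊢
      rw [← hℓ] at *
      rw [if_pos hu]
    have hrankY : ∀ i ∈ Finset.Icc 1 C,
        ((p i : ℝ) + 1) * Y ≤ min (η (ℓ i)) (cumBW (B (ℓ i)) (t i)) := by
      intro i hi
      have h1 : (p i + 1 : ℕ) ≤ caps i (ℓ i) := hrank i hi
      have h0 : (0:ℝ) ≤ min (η (ℓ i)) (cumBW (B (ℓ i)) (t i)) :=
        le_min (hη _) (cumBW_nonneg _ (fun j hj => hB _ j hj) _)
      have h2 : ((p i + 1 : ℕ) : ℝ) ≤ min (η (ℓ i)) (cumBW (B (ℓ i)) (t i)) / Y := by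
        calc ((p i + 1 : ℕ) : ℝ)
            ≤ ((⌊min (η (ℓ i)) (cumBW (B (ℓ i)) (t i)) / Y⌋₊ : ℕ) : ℝ) := by
              exact_mod_cast h1
          _ ≤ _ := Nat.floor_le (div_nonneg h0 hY.le)
      have h3 := (le_div_iff₀ hY).mp h2
      push_cast at h3
      linarith
    set z : ℕ → ℕ → ℝ := fun i j => if 1 ≤ j ∧ j ≤ t i then
        (min (max (cumBW (B (ℓ i)) j) ((p i : ℝ)*Y)) (((p i : ℝ)+1)*Y)
         - min (max (cumBW (B (ℓ i)) (j-1)) ((p i : ℝ)*Y)) (((p i : ℝ)+1)*Y)) else 0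
      with hzdef
    have hznn : ∀ i j, 0 ≤ z i j := by
      intro i j
      simp only [hzdef]
      split
      · exact sub_nonneg.mpr (clamp_mono (cumBW_mono _ (fun k hk => hB _ k hk) (Nat.sub_le j 1)))
      · exact le_refl 0
    have hzsumY : ∀ i ∈ Finset.Icc 1 C, ∑ j ∈ Finset.Icc 1 (t i), z i j = Y := by
      intro i hi
      have : ∀ j ∈ Finset.Icc 1 (t i), z i j =
          (fun j => min (max (cumBW (B (ℓ i)) j) ((p i : ℝ)*Y)) (((p i : ℝ)+1)*Y)) j
          - (fun j => min (max (cumBW (B (ℓ i)) j) ((p i : ℝ)*Y)) (((p i : ℝ)+1)*Y)) (j-1) := by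
        intro j hj
        simp only [hzdef]
        exact if_pos (Finset.mem_Icc.mp hj)
      rw [Finset.sum_congr rfl this, telescope_Icc]
      have hpY0 : (0:ℝ) ≤ (p i : ℝ) * Y := mul_nonneg (Nat.cast_nonneg _) hY.le
      have hend : min (max (cumBW (B (ℓ i)) (t i)) ((p i : ℝ)*Y)) (((p i : ℝ)+1)*Y)
          = ((p i : ℝ)+1)*Y := by
        apply min_eq_right
        calc ((p i : ℝ)+1)*Y ≤ min (η (ℓ i)) (cumBW (B (ℓ i)) (t i)) := hrankY i hi
          _ ≤ cumBW (B (ℓ i)) (t i) := min_le_right _ _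
          _ ≤ max (cumBW (B (ℓ i)) (t i)) ((p i : ℝ)*Y) := le_max_left _ _
      have hstart : min (max (cumBW (B (ℓ i)) 0) ((p i : ℝ)*Y)) (((p i : ℝ)+1)*Y)
          = (p i : ℝ)*Y := by
        rw [cumBW_zero, max_eq_right hpY0]
        exact min_eq_left (by nlinarith)
      rw [hend, hstart]
      ring
    refine ⟨ℓ, z, fun i _ j => hznn i j, hzsumY, ?_, ?_, ?_⟩
    · intro i hi j hj
      simp only [hzdef]
      exact if_neg (by omega)
    · -- per-slot constraint
      intro u j hj
      have hRnn : ∀ τ, 0 ≤ cumBW (B u) τ := fun τ => cumBW_nonneg _ (fun k hk => hB u k hk) τ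
      have hRm : cumBW (B u) (j-1) ≤ cumBW (B u) j :=
        cumBW_mono _ (fun k hk => hB u k hk) (Nat.sub_le j 1)
      set F : ℕ → ℝ := fun q =>
        min (max (cumBW (B u) j) ((q:ℝ)*Y)) (((q:ℝ)+1)*Y)
          - min (max (cumBW (B u) (j-1)) ((q:ℝ)*Y)) (((q:ℝ)+1)*Y)
        with hF
      have hFnn : ∀ q, 0 ≤ F q := fun q => sub_nonneg.mpr (clamp_mono hRm)
      have hzF : ∀ i ∈ (Finset.Icc 1 C).filter (fun i => ℓ i = u), z i j ≤ F (p i) := by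
        intro i hi
        have hu : ℓ i = u := (Finset.mem_filter.mp hi).2
        simp only [hzdef, hF, hu]
        split
        · exact le_rfl
        · exact sub_nonneg.mpr (clamp_mono hRm)
      have hpinj : ∀ i ∈ (Finset.Icc 1 C).filter (fun i => ℓ i = u),
          ∀ i' ∈ (Finset.Icc 1 C).filter (fun i => ℓ i = u), p i = p i' → i = i' := by
        have key : ∀ i ∈ (Finset.Icc 1 C).filter (fun i => ℓ i = u),
            ∀ i' ∈ (Finset.Icc 1 C).filter (fun i => ℓ i = u), i < i' → p i < p i' := by
          intro i hi i' hi' hlt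
          obtain ⟨hmem, hu⟩ := Finset.mem_filter.mp hi
          obtain ⟨hmem', hu'⟩ := Finset.mem_filter.mp hi'
          obtain ⟨h1, _⟩ := Finset.mem_Icc.mp hmem
          obtain ⟨h1', _⟩ := Finset.mem_Icc.mp hmem'
          have e1 : gc hU0 caps i u = gc hU0 caps (i-1) u + 1 := hgcstep i h1 u hu
          have e2 : gc hU0 caps i u ≤ gc hU0 caps (i'-1) u := gc_mono hU0 caps (by omega) u
          simp only [hp, hu, hu']
          omega
        intro i hi i' hi' hpe
        rcases lt_trichotomy i i' with h | h | h
        · exact absurd hpe (by have := key i hi i' hi' h; omega)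
        · exact h
        · exact absurd hpe (by have := key i' hi' i hi h; omega)
      calc ∑ i ∈ (Finset.Icc 1 C).filter (fun i => ℓ i = u), z i j
          ≤ ∑ i ∈ (Finset.Icc 1 C).filter (fun i => ℓ i = u), F (p i) :=
            Finset.sum_le_sum hzF
        _ = ∑ q ∈ ((Finset.Icc 1 C).filter (fun i => ℓ i = u)).image p, F q :=
            (Finset.sum_image hpinj).symm
        _ ≤ ∑ q ∈ Finset.range C, F q := by
            apply Finset.sum_le_sum_of_subset_of_nonneg
            · intro q hq
              obtain ⟨i, hi, rfl⟩ := Finset.mem_image.mp hq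
              obtain ⟨hmem, _⟩ := Finset.mem_filter.mp hi
              obtain ⟨h1, h2⟩ := Finset.mem_Icc.mp hmem
              have : p i ≤ i - 1 := by
                simp only [hp]; exact gc_le_self hU0 caps (i-1) (ℓ i)
              exact Finset.mem_range.mpr (by omega)
            · intro q _ _; exact hFnn q
        _ = min (cumBW (B u) j) ((C:ℝ)*Y) - min (cumBW (B u) (j-1)) ((C:ℝ)*Y) := by
            have e : ∀ q ∈ Finset.range C, F q =
                (min (max (cumBW (B u) j) ((q:ℝ)*Y)) (((q:ℝ)+1)*Y) - (q:ℝ)*Y)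
                - (min (max (cumBW (B u) (j-1)) ((q:ℝ)*Y)) (((q:ℝ)+1)*Y) - (q:ℝ)*Y) := by
              intro q _; simp only [hF]; ring
            rw [Finset.sum_congr rfl e, Finset.sum_sub_distrib,
              sum_clamp hY (hRnn j) C, sum_clamp hY (hRnn (j-1)) C]
        _ ≤ cumBW (B u) j - cumBW (B u) (j-1) := by
            rcases le_total (cumBW (B u) j) ((C:ℝ)*Y) with h | h <;>
              rcases le_total (cumBW (B u) (j-1)) ((C:ℝ)*Y) with h' | h' <;>
              simp [min_eq_left, min_eq_right, h, h'] <;> linarith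
        _ = B u j := by
            obtain ⟨j', rfl⟩ : ∃ j', j = j' + 1 := ⟨j - 1, by omega⟩
            simp [cumBW_succ]
    · -- per-link capacity
      intro u
      have hgcle : ∀ i, i ≤ C → ∀ v, gc hU0 caps i v ≤ ⌊η v / Y⌋₊ := by
        intro i
        induction i with
        | zero => intro _ v; simp [gc]
        | succ i ih =>
          intro hiC v
          rw [gc_succ]
          split
          · rename_i hglv
            have hsu := hsucc (i+1) (Finset.mem_Icc.mpr ⟨by omega, hiC⟩)
            have hspec := pickLink_spec hU0 (caps (i+1)) (gc hU0 caps i)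
              (by simpa using hsu)
            have hgleq : gl hU0 caps (i+1) = pickLink hU0 (caps (i+1)) (gc hU0 caps i) := rfl
            rw [hgleq] at hglv
            rw [hglv] at hspec
            have hcaple : caps (i+1) v ≤ ⌊η v / Y⌋₊ := by
              apply Nat.floor_le_floor
              gcongr
              exact min_le_left _ _
            omega
          · have := ih (by omega) v
            omega
      have hcard : ((Finset.Icc 1 C).filter (fun i => ℓ i = u)).card = gc hU0 caps C u := by
        rw [gc_card]
      have hsumeq : ∑ i ∈ (Finset.Icc 1 C).filter (fun i => ℓ i = u),
          ∑ j ∈ Finset.Icc 1 (t i), z i j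
          = ((gc hU0 caps C u : ℕ) : ℝ) * Y := by
        rw [Finset.sum_congr rfl (fun i hi => hzsumY i (Finset.mem_of_mem_filter i hi))]
        rw [Finset.sum_const, hcard, nsmul_eq_mul]
      rw [hsumeq]
      have h1 : (gc hU0 caps C u : ℝ) ≤ η u / Y := by
        calc (gc hU0 caps C u : ℝ) ≤ (⌊η u / Y⌋₊ : ℝ) := by
              exact_mod_cast hgcle C (le_refl C) u
          _ ≤ η u / Y := Nat.floor_le (div_nonneg (hη u) hY.le)
      calc (gc hU0 caps C u : ℝ) * Y ≤ (η u / Y) * Y := by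
            exact mul_le_mul_of_nonneg_right h1 hY.le
        _ = η u := by field_simp
  · -- lower bound
    intro dstall hmono hfeas
    apply Nat.find_le
    intro i hi
    obtain ⟨hi1, hiC⟩ := Finset.mem_Icc.mp hi
    obtain ⟨ℓ, z, hz0, hzsum, hzout, hslot, hcap⟩ := hfeas
    set T := s + (i-1)*L + dstall C with hT
    have hsubC : Finset.Icc 1 i ⊆ Finset.Icc 1 C := Finset.Icc_subset_Icc_right hiC
    have key : ∀ u : Fin U,
        (((Finset.Icc 1 i).filter (fun k => ℓ k = u)).card : ℝ) * Y
          ≤ min (η u) (cumBW (B u) T) := by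
      intro u
      set fi := (Finset.Icc 1 i).filter (fun k => ℓ k = u) with hfi
      set fC := (Finset.Icc 1 C).filter (fun k => ℓ k = u) with hfC
      have hsub : fi ⊆ fC := Finset.filter_subset_filter _ hsubC
      have hmemC : ∀ k ∈ fi, k ∈ Finset.Icc 1 C :=
        fun k hk => hsubC (Finset.mem_of_mem_filter k hk)
      have hcardY : ∑ k ∈ fi, ∑ j ∈ Finset.Icc 1 (s + (k-1)*L + dstall k), z k j
          = (fi.card : ℝ) * Y := by
        rw [Finset.sum_congr rfl (fun k hk => hzsum k (hmemC k hk)),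
          Finset.sum_const, nsmul_eq_mul]
      apply le_min
      · -- ≤ η u
        rw [← hcardY]
        calc ∑ k ∈ fi, ∑ j ∈ Finset.Icc 1 (s + (k-1)*L + dstall k), z k j
            ≤ ∑ k ∈ fC, ∑ j ∈ Finset.Icc 1 (s + (k-1)*L + dstall k), z k j := by
              apply Finset.sum_le_sum_of_subset_of_nonneg hsub
              intro k hk _
              exact Finset.sum_nonneg fun j _ =>
                hz0 k (Finset.mem_of_mem_filter k hk) j
          _ ≤ η u := hcap u
      · -- ≤ cumBW (B u) T
        rw [← hcardY]
        have hdle : ∀ k ∈ fi, s + (k-1)*L + dstall k ≤ T := by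
          intro k hk
          obtain ⟨hk1, hki⟩ := Finset.mem_Icc.mp (Finset.mem_of_mem_filter k hk)
          have : dstall k ≤ dstall C := hmono (by omega)
          have : (k-1)*L ≤ (i-1)*L := Nat.mul_le_mul_right L (by omega)
          omega
        calc ∑ k ∈ fi, ∑ j ∈ Finset.Icc 1 (s + (k-1)*L + dstall k), z k j
            ≤ ∑ k ∈ fi, ∑ j ∈ Finset.Icc 1 T, z k j := by
              apply Finset.sum_le_sum
              intro k hk
              apply Finset.sum_le_sum_of_subset_of_nonneg
                (Finset.Icc_subset_Icc_right (hdle k hk))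
              intro j _ _
              exact hz0 k (hmemC k hk) j
          _ = ∑ j ∈ Finset.Icc 1 T, ∑ k ∈ fi, z k j := Finset.sum_comm
          _ ≤ ∑ j ∈ Finset.Icc 1 T, B u j := by
              apply Finset.sum_le_sum
              intro j hj
              calc ∑ k ∈ fi, z k j ≤ ∑ k ∈ fC, z k j := by
                    apply Finset.sum_le_sum_of_subset_of_nonneg hsub
                    intro k hk _
                    exact hz0 k (Finset.mem_of_mem_filter k hk) j
                _ ≤ B u j := hslot u j (Finset.mem_Icc.mp hj).1
          _ = cumBW (B u) T := rfl
    -- conclude i ≤ Vval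
    have hcount : ∀ u : Fin U,
        ((Finset.Icc 1 i).filter (fun k => ℓ k = u)).card
          ≤ ⌊min (η u) (cumBW (B u) T) / Y⌋₊ := by
      intro u
      apply Nat.le_floor
      rw [le_div_iff₀ hY]
      exact key u
    have hparts : i = ∑ u : Fin U, ((Finset.Icc 1 i).filter (fun k => ℓ k = u)).card := by
      have := Finset.card_eq_sum_card_fiberwise
        (f := ℓ) (s := Finset.Icc 1 i) (t := Finset.univ)
        (fun x _ => Finset.mem_univ (ℓ x))
      simpa [Nat.card_Icc] using this
    calc i = ∑ u : Fin U, ((Finset.Icc 1 i).filter (fun k => ℓ k = u)).card := hparts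
      _ ≤ ∑ u : Fin U, ⌊min (η u) (cumBW (B u) T) / Y⌋₊ :=
          Finset.sum_le_sum fun u _ => hcount u
      _ = Vval U Y (fun i => s + (i - 1) * L + dstall C) B η i := rfl
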